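/- arXiv:2407.02932 — 2 statements merged into one kernel-verified Lean document; each statement's English description precedes it below -/
import Mathlib

section
/- Let P ⊆ P̄ be Hilbert spaces with P compactly and densely embedded in P̄ and let L : P → P* be the self-adjoint coercive operator with ⟨L p, q⟩ = (p,q)_P. Let (λ_k, w_k) be eigenpairs of L (i.e. L w_k = λ_k w_k with w_k ∈ P, ‖w_k‖_{P̄} = 1, λ_k → +∞). For k ≥ 1 put r_k := ⌈λ_k⌉, p⁽ᵏ⁾(t) := (t/T)^{r_k} w_k and m⁽ᵏ⁾(t) := −(λ_k/(r_k+1)) (t^{r_k+1}/T^{r_k}) w_k. Then ∂ₜ m⁽ᵏ⁾ + L p⁽ᵏ⁾ = 0 and m⁽ᵏ⁾(0) = 0 for every k, while ∫₀ᵀ ‖p⁽ᵏ⁾(t)‖_P² dt = λ_k T/(2 r_k + 1) → T/2 and ∫₀ᵀ ‖p⁽ᵏ⁾(t)‖_{P̄}² dt = T/(2 r_k + 1) → 0 as k → ∞. -/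
open Filter

lemma aux_int (T : ℝ) (hT : 0 < T) (n : ℕ) :
    (∫ t in (0:ℝ)..T, ((t / T) ^ n) ^ 2) = T / (2 * (n : ℝ) + 1) := by
  have hT0 : T ≠ 0 := hT.ne'
  have h1 : ∀ t : ℝ, ((t / T) ^ n) ^ 2 = t ^ (2 * n) * (T ^ (2 * n))⁻¹ := by
    intro t
    rw [div_pow, div_pow, ← pow_mul, ← pow_mul, div_eq_mul_inv, Nat.mul_comm n 2]
  have h2 : (∫ t in (0:ℝ)..T, ((t / T) ^ n) ^ 2)
      = (∫ t in (0:ℝ)..T, t ^ (2 * n)) * (T ^ (2 * n))⁻¹ := by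
    simp_rw [h1]
    exact intervalIntegral.integral_mul_const _ _
  rw [h2, integral_pow]
  have hne : (2 * (n:ℝ) + 1) ≠ 0 := by positivity
  have hpne : (T:ℝ) ^ (2*n) ≠ 0 := pow_ne_zero _ hT0
  rw [zero_pow (by omega)]
  field_simp
  rw [pow_succ]
  push_cast
  ring

lemma aux_lim (T c : ℝ) (hc : 0 < c) :
    Tendsto (fun x : ℝ => x * T / (2 * x + c)) atTop (nhds (T / 2)) := by
  have h2 : Tendsto (fun x : ℝ => 2 + c / x) atTop (nhds 2) := by
    have := (tendsto_inv_atTop_zero (𝕜 := ℝ)).const_mul c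
    simpa [div_eq_mul_inv] using tendsto_const_nhds.add this
  have h1 : Tendsto (fun x : ℝ => T / (2 + c / x)) atTop (nhds (T / 2)) := by
    simpa [Pi.div_def] using tendsto_const_nhds.div h2 two_ne_zero
  apply h1.congr'
  filter_upwards [eventually_gt_atTop 0] with x hx
  have hne : (2 : ℝ) * x + c ≠ 0 := by positivity
  field_simp


/-- The rough trial functions of Proposition 3.4: for eigenpairs `(λ_k, w_k)` of the
canonical operator `L` of the Hilbert triplet `P ⊆ P̄ ≡ P̄* ⊆ P*` (embeddings `i, j`),
with `r_k = ⌈λ_k⌉`, `p⁽ᵏ⁾(t) = (t/T)^{r_k} w_k`,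
`m⁽ᵏ⁾(t) = −(λ_k/(r_k+1))(t^{r_k+1}/T^{r_k}) w_k`, one has
`∂ₜ m⁽ᵏ⁾ + L p⁽ᵏ⁾ = 0`, `m⁽ᵏ⁾(0) = 0`,
`∫₀ᵀ ‖p⁽ᵏ⁾‖_P² = λ_k T/(2r_k+1) → T/2` and `∫₀ᵀ ‖p⁽ᵏ⁾‖_{P̄}² = T/(2r_k+1) → 0`. -/
theorem stmt_5 {P Pbar : Type*} [NormedAddCommGroup P] [InnerProductSpace ℝ P]
    [NormedAddCommGroup Pbar] [InnerProductSpace ℝ Pbar]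
    (i : P →L[ℝ] Pbar) (j : Pbar →L[ℝ] (P →L[ℝ] ℝ)) (L : P →L[ℝ] (P →L[ℝ] ℝ))
    (T : ℝ) (hT : 0 < T)
    (lam : ℕ → ℝ) (w : ℕ → P) (r : ℕ → ℕ)
    (hpos : ∀ k, 0 < lam k)
    (heig : ∀ k, L (w k) = lam k • j (i (w k)))
    (hnorm1 : ∀ k, ‖i (w k)‖ = 1)
    (hnormP : ∀ k, ‖w k‖ ^ 2 = lam k)
    (htend : Filter.Tendsto lam Filter.atTop Filter.atTop)
    (hr : ∀ k, r k = ⌈lam k⌉₊) :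
    (∀ k t, HasDerivAt
        (fun s : ℝ => j ((-(lam k / ((r k : ℝ) + 1)) * (s ^ (r k + 1) / T ^ (r k))) • i (w k)))
        (-(L ((t / T) ^ (r k) • w k))) t)
    ∧ (∀ k, (-(lam k / ((r k : ℝ) + 1)) * ((0:ℝ) ^ (r k + 1) / T ^ (r k))) • i (w k) = 0)
    ∧ (∀ k, (∫ t in (0:ℝ)..T, ‖(t / T) ^ (r k) • w k‖ ^ 2)
        = lam k * T / (2 * (r k : ℝ) + 1))
    ∧ Filter.Tendsto (fun k => lam k * T / (2 * (r k : ℝ) + 1)) Filter.atTop (nhds (T / 2))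
    ∧ (∀ k, (∫ t in (0:ℝ)..T, ‖i ((t / T) ^ (r k) • w k)‖ ^ 2)
        = T / (2 * (r k : ℝ) + 1))
    ∧ Filter.Tendsto (fun k => T / (2 * (r k : ℝ) + 1)) Filter.atTop (nhds 0) := by
  have hT0 : T ≠ 0 := hT.ne'
  -- bounds lam k ≤ r k < lam k + 1
  have hle : ∀ k, lam k ≤ (r k : ℝ) := by
    intro k; rw [hr k]; exact Nat.le_ceil _
  have hlt : ∀ k, (r k : ℝ) < lam k + 1 := by
    intro k; rw [hr k]; exact Nat.ceil_lt_add_one (hpos k).le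
  refine ⟨?_, ?_, ?_, ?_, ?_, ?_⟩
  · intro k t
    simp only [map_smul, heig, smul_smul, ← neg_smul]
    have h := (((hasDerivAt_pow (r k + 1) t).div_const ((T:ℝ) ^ (r k))).const_mul
      (-(lam k / ((r k:ℝ)+1)))).smul_const (j (i (w k)))
    refine h.congr_deriv ?_
    have hne : ((r k:ℝ)+1) ≠ 0 := by positivity
    have hTp : (T:ℝ) ^ (r k) ≠ 0 := pow_ne_zero _ hT0
    have hs : (-(lam k / ((r k:ℝ) + 1)) * (((r k + 1 : ℕ) : ℝ) * t ^ (r k + 1 - 1) / T ^ r k))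
        = -((t / T) ^ r k * lam k) := by
      simp only [Nat.add_sub_cancel]
      push_cast
      rw [div_pow]
      field_simp
    rw [hs]
    exact neg_smul _ _
  · intro k
    simp [zero_pow (Nat.succ_ne_zero (r k))]
  · intro k
    have h1 : ∀ t : ℝ, ‖(t / T) ^ (r k) • w k‖ ^ 2 = ((t / T) ^ (r k)) ^ 2 * lam k := by
      intro t
      rw [norm_smul, mul_pow, Real.norm_eq_abs, sq_abs, hnormP k]
    simp_rw [h1]
    rw [intervalIntegral.integral_mul_const, aux_int T hT]
    ring
  · apply tendsto_of_tendsto_of_tendsto_of_le_of_le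
      ((aux_lim T 3 (by norm_num)).comp htend) ((aux_lim T 1 (by norm_num)).comp htend)
    · intro k
      have hb : 2 * ((r k : ℝ)) + 1 ≤ 2 * lam k + 3 := by nlinarith [hlt k]
      have : (0:ℝ) < 2 * (r k : ℝ) + 1 := by positivity
      simp only [Function.comp_apply]
      gcongr
      exact (mul_nonneg (hpos k).le hT.le)
    · intro k
      have hb : 2 * lam k + 1 ≤ 2 * ((r k : ℝ)) + 1 := by nlinarith [hle k]
      have : (0:ℝ) < 2 * lam k + 1 := by linarith [hpos k]
      simp only [Function.comp_apply]
      gcongr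
      exact (mul_nonneg (hpos k).le hT.le)
  · intro k
    have h1 : ∀ t : ℝ, ‖i ((t / T) ^ (r k) • w k)‖ ^ 2 = ((t / T) ^ (r k)) ^ 2 := by
      intro t
      rw [map_smul, norm_smul, mul_pow, Real.norm_eq_abs, sq_abs, hnorm1 k,
        one_pow, mul_one]
    simp_rw [h1]
    exact aux_int T hT _
  · have hden : Filter.Tendsto (fun k => 2 * ((r k : ℝ)) + 1) Filter.atTop Filter.atTop := by
      apply Filter.tendsto_atTop_add_const_right
      apply Filter.Tendsto.const_mul_atTop (by norm_num : (0:ℝ) < 2)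
      exact tendsto_atTop_mono hle htend
    exact tendsto_const_nhds.div_atTop hden
end

section
/- Let P ⊆ P̄ ≡ P̄* ⊆ P* be a Hilbert triplet. If p ∈ L²([0,T]; P) and m ∈ H¹([0,T]; P*) satisfy g := ∂ₜ m + L p ∈ L²([0,T]; P*) (with L the canonical isomorphism P → P*), then for every t ∈ [0,T] the antiderivative P(t) := ∫₀ᵗ p(s) ds belongs to P and satisfies ‖P(t)‖_P² ≤ 3 ( T ∫₀ᵀ ‖g(s)‖_{P*}² ds + ‖m(t)‖_{P*}² + ‖m(0)‖_{P*}² ). -/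
open MeasureTheory intervalIntegral

noncomputable def rieszCLM (P : Type*) [NormedAddCommGroup P] [InnerProductSpace ℝ P]
    [CompleteSpace P] : P →L[ℝ] StrongDual ℝ P :=
  LinearMap.mkContinuous
    { toFun := fun x => InnerProductSpace.toDual ℝ P x
      map_add' := fun x y => by simp
      map_smul' := fun r x => by simp }
    1 (fun x => by simp)

@[simp] lemma rieszCLM_apply {P : Type*} [NormedAddCommGroup P] [InnerProductSpace ℝ P]
    [CompleteSpace P] (x : P) : rieszCLM P x = InnerProductSpace.toDual ℝ P x := rfl

lemma cs_aux (t : ℝ) (ht : 0 ≤ t) (h : ℝ → ℝ) (hnn : ∀ s, 0 ≤ h s)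
    (hi : IntervalIntegrable h volume 0 t)
    (hi2 : IntervalIntegrable (fun s => h s ^ 2) volume 0 t) :
    (∫ s in (0:ℝ)..t, h s) ^ 2 ≤ t * ∫ s in (0:ℝ)..t, h s ^ 2 := by
  rcases eq_or_lt_of_le ht with rfl | ht
  · simp
  set I := ∫ s in (0:ℝ)..t, h s with hI
  set J := ∫ s in (0:ℝ)..t, h s ^ 2 with hJ
  have key : 0 ≤ ∫ s in (0:ℝ)..t, (t * h s - I) ^ 2 :=
    intervalIntegral.integral_nonneg ht.le (fun s _ => sq_nonneg _)
  have expand : (∫ s in (0:ℝ)..t, (t * h s - I) ^ 2)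
      = t ^ 2 * J - 2 * t * I * I + t * I ^ 2 := by
    have h1 : (fun s => (t * h s - I) ^ 2)
        = fun s => t ^ 2 * (h s ^ 2) - (2 * t * I) * h s + I ^ 2 := by
      funext s; ring
    rw [h1, intervalIntegral.integral_add ((hi2.const_mul (t^2)).sub (hi.const_mul (2*t*I)))
        intervalIntegrable_const,
      intervalIntegral.integral_sub (hi2.const_mul (t^2)) (hi.const_mul (2*t*I)),
      intervalIntegral.integral_const_mul, intervalIntegral.integral_const_mul,
      intervalIntegral.integral_const, ← hI, ← hJ]
    simp only [smul_eq_mul, sub_zero]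
  rw [expand] at key
  nlinarith [key, ht]

set_option maxHeartbeats 1000000 in
/-- Control of the anti-derivative of the pressure: if `g := ∂ₜ m + L p ∈ L²(P*)` with
`L` the Riesz isometry of `P`, then for every `t ∈ [0,T]`,
`‖∫₀ᵗ p‖_P² ≤ 3 (T ∫₀ᵀ ‖g‖²_{P*} + ‖m(t)‖²_{P*} + ‖m(0)‖²_{P*})`. -/
theorem stmt_9 {P : Type*} [NormedAddCommGroup P] [InnerProductSpace ℝ P] [CompleteSpace P]
    (T : ℝ) (hT : 0 < T) (p : ℝ → P) (m m' : ℝ → StrongDual ℝ P)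
    (hm : ∀ t, HasDerivAt m (m' t) t)
    (hp : IntervalIntegrable p MeasureTheory.volume 0 T)
    (hm' : IntervalIntegrable m' MeasureTheory.volume 0 T)
    (hg : IntervalIntegrable
      (fun s => ‖m' s + InnerProductSpace.toDual ℝ P (p s)‖ ^ 2) MeasureTheory.volume 0 T) :
    ∀ t ∈ Set.Icc (0:ℝ) T,
      ‖∫ s in (0:ℝ)..t, p s‖ ^ 2 ≤
        3 * (T * (∫ s in (0:ℝ)..T, ‖m' s + InnerProductSpace.toDual ℝ P (p s)‖ ^ 2)
          + ‖m t‖ ^ 2 + ‖m 0‖ ^ 2) := by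
  intro t ht
  obtain ⟨ht0, htT⟩ := ht
  set g : ℝ → StrongDual ℝ P := fun s => m' s + InnerProductSpace.toDual ℝ P (p s) with hgdef
  have hsub : Set.uIcc (0:ℝ) t ⊆ Set.uIcc (0:ℝ) T := by
    rw [Set.uIcc_of_le ht0, Set.uIcc_of_le (ht0.trans htT)]
    exact Set.Icc_subset_Icc le_rfl htT
  have hLp : IntervalIntegrable (fun s => rieszCLM P (p s)) volume 0 T :=
    ⟨((rieszCLM P).integrable_comp hp.1), ((rieszCLM P).integrable_comp hp.2)⟩
  have hcongr : (fun s => rieszCLM P (p s)) = fun s => InnerProductSpace.toDual ℝ P (p s) :=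
    funext fun s => rieszCLM_apply _
  have hgint : IntervalIntegrable g volume 0 T := hm'.add (hcongr ▸ hLp)
  -- fundamental theorem of calculus on [0,t]
  have hm't : IntervalIntegrable m' volume 0 t := hm'.mono_set hsub
  have hpt : IntervalIntegrable p volume 0 t := hp.mono_set hsub
  have hftc : (∫ s in (0:ℝ)..t, m' s) = m t - m 0 :=
    intervalIntegral.integral_eq_sub_of_hasDerivAt (fun s _ => hm s) hm't
  have hLpt : IntervalIntegrable (fun s => rieszCLM P (p s)) volume 0 t := hLp.mono_set hsub
  have hcomm : (∫ s in (0:ℝ)..t, rieszCLM P (p s)) = rieszCLM P (∫ s in (0:ℝ)..t, p s) :=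
    (rieszCLM P).intervalIntegral_comp_comm hpt
  have hsplit : (∫ s in (0:ℝ)..t, g s)
      = (m t - m 0) + rieszCLM P (∫ s in (0:ℝ)..t, p s) := by
    rw [hgdef]
    simp only [← rieszCLM_apply]
    rw [intervalIntegral.integral_add hm't hLpt, hftc, hcomm]
  have hkey : rieszCLM P (∫ s in (0:ℝ)..t, p s) = (∫ s in (0:ℝ)..t, g s) - m t + m 0 := by
    rw [hsplit]; abel
  have hnormP : ‖∫ s in (0:ℝ)..t, p s‖ = ‖(∫ s in (0:ℝ)..t, g s) - m t + m 0‖ := by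
    rw [← hkey, rieszCLM_apply, LinearIsometryEquiv.norm_map]
  -- triangle inequality
  set a := ‖∫ s in (0:ℝ)..t, g s‖
  set b := ‖m t‖
  set c := ‖m 0‖
  have htri : ‖∫ s in (0:ℝ)..t, p s‖ ≤ a + b + c := by
    rw [hnormP]
    calc ‖(∫ s in (0:ℝ)..t, g s) - m t + m 0‖
        ≤ ‖(∫ s in (0:ℝ)..t, g s) - m t‖ + ‖m 0‖ := norm_add_le _ _
      _ ≤ a + b + c := by
          have := norm_sub_le (∫ s in (0:ℝ)..t, g s) (m t)
          simp only [a, b, c]; linarith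
  -- Cauchy–Schwarz bound on a
  have hgt : IntervalIntegrable g volume 0 t := hgint.mono_set hsub
  have hg2t : IntervalIntegrable (fun s => ‖g s‖ ^ 2) volume 0 t := hg.mono_set hsub
  have ha1 : a ≤ ∫ s in (0:ℝ)..t, ‖g s‖ :=
    intervalIntegral.norm_integral_le_integral_norm ht0
  have ha2 : (∫ s in (0:ℝ)..t, ‖g s‖) ^ 2 ≤ t * ∫ s in (0:ℝ)..t, ‖g s‖ ^ 2 :=
    cs_aux t ht0 _ (fun s => norm_nonneg _) hgt.norm hg2t
  have hmono : (∫ s in (0:ℝ)..t, ‖g s‖ ^ 2) ≤ ∫ s in (0:ℝ)..T, ‖g s‖ ^ 2 :=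
    intervalIntegral.integral_mono_interval le_rfl ht0 htT
      (Filter.Eventually.of_forall fun s => sq_nonneg _) hg
  have hJnn : 0 ≤ ∫ s in (0:ℝ)..t, ‖g s‖ ^ 2 :=
    intervalIntegral.integral_nonneg ht0 (fun s _ => sq_nonneg _)
  have ha : a ^ 2 ≤ T * ∫ s in (0:ℝ)..T, ‖g s‖ ^ 2 := by
    have h1 : a ^ 2 ≤ t * ∫ s in (0:ℝ)..t, ‖g s‖ ^ 2 := by
      have := pow_le_pow_left₀ (norm_nonneg _) ha1 2
      exact this.trans ha2
    have h2 : t * (∫ s in (0:ℝ)..t, ‖g s‖ ^ 2) ≤ T * ∫ s in (0:ℝ)..T, ‖g s‖ ^ 2 :=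
      mul_le_mul htT hmono hJnn hT.le
    linarith
  have hfin : ‖∫ s in (0:ℝ)..t, p s‖ ^ 2 ≤ 3 * (a ^ 2 + b ^ 2 + c ^ 2) := by
    nlinarith [norm_nonneg (∫ s in (0:ℝ)..t, p s), norm_nonneg (∫ s in (0:ℝ)..t, g s),
      norm_nonneg (m t), norm_nonneg (m 0), sq_nonneg (a - b), sq_nonneg (b - c),
      sq_nonneg (a - c)]
  calc ‖∫ s in (0:ℝ)..t, p s‖ ^ 2 ≤ 3 * (a ^ 2 + b ^ 2 + c ^ 2) := hfin
    _ ≤ 3 * (T * (∫ s in (0:ℝ)..T, ‖g s‖ ^ 2) + b ^ 2 + c ^ 2) := by linarith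
end
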